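/- arXiv:2006.08582 — 3 statements merged into one kernel-verified Lean document; each statement's English description precedes it below -/
import Mathlib

section
/- For complex numbers q₁, q₂ with |q₁| < 1, |q₂| < 1 (or suitable analytic continuation), the identity (q₁^{-1}z; q₁, q₂q₁^{-1})_∞ · (q₂^{-1}z; q₁q₂^{-1}, q₂)_∞ = (z; q₁, q₂q₁^{-1})_∞ · (z; q₁q₂^{-1}, q₂)_∞ holds as an identity of formal power series in z with coefficients in the field of rational functions in q₁, q₂. -/
open scoped BigOperators

/-- Coefficients of the double q-Pochhammer symbol, viewed as a formal power series:
`(z; p, q)_∞ = exp(−∑_{n≥1} z^n / (n(1−p^n)(1−q^n)))`.  The coefficients are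
characterized by the differential recursion
`n·c_n = −∑_{k=1}^{n} c_{n−k} / ((1−p^k)(1−q^k))`, `c_0 = 1`. -/
noncomputable def dPochCoeff {K : Type*} [Field K] (p q : K) : ℕ → K
  | 0 => 1
  | n + 1 => (-(n + 1 : K)⁻¹) *
      ∑ j ∈ (Finset.range (n + 1)).attach,
        dPochCoeff p q j.1 *
          ((1 - p ^ (n + 1 - j.1)) * (1 - q ^ (n + 1 - j.1)))⁻¹
  termination_by n => n
  decreasing_by exact Finset.mem_range.mp j.2

/-- The double q-Pochhammer symbol `(z; p, q)_∞` as a formal power series in `z`. -/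
noncomputable def dPoch {K : Type*} [Field K] (p q : K) : PowerSeries K :=
  PowerSeries.mk (dPochCoeff p q)

/-- The field of rational functions in `q₁, q₂` (over `ℚ`). -/
abbrev RatFunc2 : Type := FractionRing (MvPolynomial (Fin 2) ℚ)

/-- `q₁` as a rational function. -/
noncomputable def qv1 : RatFunc2 :=
  algebraMap (MvPolynomial (Fin 2) ℚ) RatFunc2 (MvPolynomial.X 0)

/-- `q₂` as a rational function. -/
noncomputable def qv2 : RatFunc2 :=
  algebraMap (MvPolynomial (Fin 2) ℚ) RatFunc2 (MvPolynomial.X 1)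

/-!
Both sides equal `(z; q₁, q₂)_∞`. A power series is determined by its constant term and its
logarithmic derivative, and that of `(z; p, q)_∞` is `-∑ₙ zⁿ / ((1 - pⁿ⁺¹)(1 - qⁿ⁺¹))`.
Writing `a = q₁ⁿ⁺¹`, `b = q₂ⁿ⁺¹`, the claim for the right-hand side reduces to the partial
fraction identity `1/((1-a)(1-b/a)) + 1/((1-a/b)(1-b)) = 1/((1-a)(1-b))`. Rescaling `z ↦ z/q`
divides the `n`-th coefficient of a logarithmic derivative by `qⁿ⁺¹`, so for the left-hand side
the two summands are divided by `a` and `b`, and the sum is again `1/((1-a)(1-b))`.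
-/

open PowerSeries

noncomputable def dPochLogDeriv {K : Type*} [Field K] (p q : K) : K⟦X⟧ :=
  mk fun n => -((1 - p ^ (n + 1)) * (1 - q ^ (n + 1)))⁻¹

namespace PowerSeries

variable {R : Type*} [CommRing R]

theorem constantCoeff_rescale (c : R) (f : R⟦X⟧) :
    constantCoeff (rescale c f) = constantCoeff f := by
  rw [← coeff_zero_eq_constantCoeff_apply, coeff_rescale, pow_zero, one_mul,
    coeff_zero_eq_constantCoeff_apply]

theorem derivative_rescale (c : R) (f : R⟦X⟧) :
    d⁄dX R (rescale c f) = C c * rescale c (d⁄dX R f) := by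
  ext n
  simp only [coeff_derivative, coeff_rescale, coeff_C_mul]
  ring

theorem derivative_rescale_of_eq_mul {f s : R⟦X⟧} (hf : d⁄dX R f = f * s) (c : R) :
    d⁄dX R (rescale c f) = rescale c f * (C c * rescale c s) := by
  rw [derivative_rescale, hf, map_mul]
  ring

theorem derivative_mul_of_eq_mul {f g s t : R⟦X⟧} (hf : d⁄dX R f = f * s)
    (hg : d⁄dX R g = g * t) : d⁄dX R (f * g) = f * g * (s + t) := by
  rw [Derivation.leibniz, hf, hg, smul_eq_mul, smul_eq_mul]
  ring

theorem eq_of_derivative_eq_mul [IsAddTorsionFree R] {f g t : R⟦X⟧}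
    (hf : d⁄dX R f = f * t) (hg : d⁄dX R g = g * t)
    (h0 : constantCoeff f = constantCoeff g) : f = g := by
  ext n
  induction n using Nat.strong_induction_on with
  | _ n ih =>
    obtain _ | n := n
    · simpa using h0
    · have hcoeff : coeff n (f * t) = coeff n (g * t) := by
        rw [coeff_mul, coeff_mul]
        refine Finset.sum_congr rfl fun x hx => ?_
        rw [ih x.1 (by have := Finset.HasAntidiagonal.mem_antidiagonal.mp hx; omega)]
      rw [← hf, ← hg, coeff_derivative, coeff_derivative, ← Nat.cast_succ, mul_comm,
        mul_comm _ (n.succ : R), ← nsmul_eq_mul, ← nsmul_eq_mul] at hcoeff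
      exact nsmul_right_injective n.succ_ne_zero hcoeff

end PowerSeries

section dPoch

variable {K : Type*} [Field K]

theorem constantCoeff_dPoch (p q : K) : constantCoeff (dPoch p q) = 1 := by
  rw [← coeff_zero_eq_constantCoeff_apply, dPoch, coeff_mk, dPochCoeff]

variable [CharZero K]

theorem derivative_dPoch (p q : K) :
    d⁄dX K (dPoch p q) = dPoch p q * dPochLogDeriv p q := by
  ext n
  rw [coeff_derivative, coeff_mul, Finset.Nat.sum_antidiagonal_eq_sum_range_succ_mk]
  simp only [dPoch, dPochLogDeriv, coeff_mk]
  rw [dPochCoeff, Finset.sum_attach (Finset.range (n + 1))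
      (fun j => dPochCoeff p q j * ((1 - p ^ (n + 1 - j)) * (1 - q ^ (n + 1 - j)))⁻¹)]
  have hn : ((n : K) + 1) ≠ 0 := by exact_mod_cast n.succ_ne_zero
  rw [neg_mul, neg_mul, inv_mul_eq_div, div_mul_cancel₀ _ hn, ← Finset.sum_neg_distrib]
  refine Finset.sum_congr rfl fun k hk => ?_
  rw [show n - k + 1 = n + 1 - k by have := Finset.mem_range.mp hk; omega, mul_neg]

theorem eq_dPoch_of_derivative {p q : K} {f : K⟦X⟧}
    (hf : d⁄dX K f = f * dPochLogDeriv p q) (h0 : constantCoeff f = 1) : f = dPoch p q :=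
  eq_of_derivative_eq_mul hf (derivative_dPoch p q) (h0.trans (constantCoeff_dPoch p q).symm)

end dPoch

section PartialFractions

variable {K : Type*} [Field K] {a b : K}

theorem inv_one_sub_mul_add_inv_one_sub_mul (ha : a ≠ 0) (hb : b ≠ 0) (ha1 : a ≠ 1)
    (hb1 : b ≠ 1) (hab : a ≠ b) :
    ((1 - a) * (1 - b * a⁻¹))⁻¹ + ((1 - a * b⁻¹) * (1 - b))⁻¹ = ((1 - a) * (1 - b))⁻¹ := by
  have : (1 : K) - a ≠ 0 := sub_ne_zero.mpr ha1.symm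
  have : (1 : K) - b ≠ 0 := sub_ne_zero.mpr hb1.symm
  have : a - b ≠ 0 := sub_ne_zero.mpr hab
  field_simp
  ring

theorem inv_mul_inv_one_sub_mul_add_inv_mul_inv_one_sub_mul (ha : a ≠ 0) (hb : b ≠ 0)
    (ha1 : a ≠ 1) (hb1 : b ≠ 1) (hab : a ≠ b) :
    a⁻¹ * ((1 - a) * (1 - b * a⁻¹))⁻¹ + b⁻¹ * ((1 - a * b⁻¹) * (1 - b))⁻¹ =
      ((1 - a) * (1 - b))⁻¹ := by
  have : (1 : K) - a ≠ 0 := sub_ne_zero.mpr ha1.symm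
  have : (1 : K) - b ≠ 0 := sub_ne_zero.mpr hb1.symm
  have : a - b ≠ 0 := sub_ne_zero.mpr hab
  field_simp
  ring

end PartialFractions

section Shift

variable {K : Type*} [Field K] {a b : K}

theorem dPochLogDeriv_add (ha : a ≠ 0) (hb : b ≠ 0) (ha1 : ∀ n : ℕ, a ^ (n + 1) ≠ 1)
    (hb1 : ∀ n : ℕ, b ^ (n + 1) ≠ 1) (hab : ∀ n : ℕ, a ^ (n + 1) ≠ b ^ (n + 1)) :
    dPochLogDeriv a (b * a⁻¹) + dPochLogDeriv (a * b⁻¹) b = dPochLogDeriv a b := by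
  ext n
  simp only [dPochLogDeriv, map_add, coeff_mk, mul_pow, inv_pow]
  rw [← neg_add, inv_one_sub_mul_add_inv_one_sub_mul (pow_ne_zero _ ha) (pow_ne_zero _ hb)
    (ha1 n) (hb1 n) (hab n)]

theorem rescale_dPochLogDeriv_add (ha : a ≠ 0) (hb : b ≠ 0) (ha1 : ∀ n : ℕ, a ^ (n + 1) ≠ 1)
    (hb1 : ∀ n : ℕ, b ^ (n + 1) ≠ 1) (hab : ∀ n : ℕ, a ^ (n + 1) ≠ b ^ (n + 1)) :
    C a⁻¹ * rescale a⁻¹ (dPochLogDeriv a (b * a⁻¹)) +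
      C b⁻¹ * rescale b⁻¹ (dPochLogDeriv (a * b⁻¹) b) = dPochLogDeriv a b := by
  ext n
  simp only [dPochLogDeriv, map_add, coeff_C_mul, coeff_rescale, coeff_mk, mul_pow, inv_pow]
  rw [← mul_assoc, ← mul_assoc, ← mul_inv, ← mul_inv, ← pow_succ', ← pow_succ', mul_neg,
    mul_neg, ← neg_add, inv_mul_inv_one_sub_mul_add_inv_mul_inv_one_sub_mul
    (pow_ne_zero _ ha) (pow_ne_zero _ hb) (ha1 n) (hb1 n) (hab n)]

variable [CharZero K]

theorem dPoch_mul_dPoch (ha : a ≠ 0) (hb : b ≠ 0) (ha1 : ∀ n : ℕ, a ^ (n + 1) ≠ 1)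
    (hb1 : ∀ n : ℕ, b ^ (n + 1) ≠ 1) (hab : ∀ n : ℕ, a ^ (n + 1) ≠ b ^ (n + 1)) :
    dPoch a (b * a⁻¹) * dPoch (a * b⁻¹) b = dPoch a b := by
  refine eq_dPoch_of_derivative ?_ (by simp [constantCoeff_dPoch])
  rw [derivative_mul_of_eq_mul (derivative_dPoch _ _) (derivative_dPoch _ _),
    dPochLogDeriv_add ha hb ha1 hb1 hab]

theorem rescale_dPoch_mul_rescale_dPoch (ha : a ≠ 0) (hb : b ≠ 0)
    (ha1 : ∀ n : ℕ, a ^ (n + 1) ≠ 1) (hb1 : ∀ n : ℕ, b ^ (n + 1) ≠ 1)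
    (hab : ∀ n : ℕ, a ^ (n + 1) ≠ b ^ (n + 1)) :
    rescale a⁻¹ (dPoch a (b * a⁻¹)) * rescale b⁻¹ (dPoch (a * b⁻¹) b) = dPoch a b := by
  refine eq_dPoch_of_derivative ?_ (by simp [constantCoeff_rescale, constantCoeff_dPoch])
  rw [derivative_mul_of_eq_mul (derivative_rescale_of_eq_mul (derivative_dPoch _ _) _)
    (derivative_rescale_of_eq_mul (derivative_dPoch _ _) _),
    rescale_dPochLogDeriv_add ha hb ha1 hb1 hab]

end Shift

section Generic

open MvPolynomial

theorem algebraMap_monomial_one_injective :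
    Function.Injective fun s : Fin 2 →₀ ℕ =>
      algebraMap (MvPolynomial (Fin 2) ℚ) RatFunc2 (monomial s 1) :=
  (IsFractionRing.injective _ _).comp (monomial_left_injective one_ne_zero)

theorem one_eq_algebraMap_monomial :
    (1 : RatFunc2) = algebraMap (MvPolynomial (Fin 2) ℚ) RatFunc2 (monomial 0 1) := by
  simp

theorem qv1_pow (k : ℕ) :
    qv1 ^ k = algebraMap (MvPolynomial (Fin 2) ℚ) RatFunc2 (monomial (Finsupp.single 0 k) 1) := by
  rw [qv1, ← map_pow, X_pow_eq_monomial]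

theorem qv2_pow (k : ℕ) :
    qv2 ^ k = algebraMap (MvPolynomial (Fin 2) ℚ) RatFunc2 (monomial (Finsupp.single 1 k) 1) := by
  rw [qv2, ← map_pow, X_pow_eq_monomial]

theorem qv1_ne_zero : qv1 ≠ 0 :=
  (map_ne_zero_iff _ (IsFractionRing.injective _ _)).mpr (X_ne_zero 0)

theorem qv2_ne_zero : qv2 ≠ 0 :=
  (map_ne_zero_iff _ (IsFractionRing.injective _ _)).mpr (X_ne_zero 1)

theorem qv1_pow_succ_ne_one (n : ℕ) : qv1 ^ (n + 1) ≠ 1 := by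
  rw [qv1_pow, one_eq_algebraMap_monomial]
  exact algebraMap_monomial_one_injective.ne (Finsupp.single_ne_zero.mpr n.succ_ne_zero)

theorem qv2_pow_succ_ne_one (n : ℕ) : qv2 ^ (n + 1) ≠ 1 := by
  rw [qv2_pow, one_eq_algebraMap_monomial]
  exact algebraMap_monomial_one_injective.ne (Finsupp.single_ne_zero.mpr n.succ_ne_zero)

theorem qv1_pow_succ_ne_qv2_pow_succ (n : ℕ) : qv1 ^ (n + 1) ≠ qv2 ^ (n + 1) := by
  rw [qv1_pow, qv2_pow]
  refine algebraMap_monomial_one_injective.ne fun h => ?_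
  exact absurd ((Finsupp.single_left_inj n.succ_ne_zero).mp h) (by decide)

end Generic

/-- As formal power series in `z` with coefficients in the field of rational
functions in `q₁, q₂`,
`(q₁⁻¹z; q₁, q₂q₁⁻¹)_∞ · (q₂⁻¹z; q₁q₂⁻¹, q₂)_∞ = (z; q₁, q₂q₁⁻¹)_∞ · (z; q₁q₂⁻¹, q₂)_∞`. -/
theorem dPoch_shift_identity :
    PowerSeries.rescale qv1⁻¹ (dPoch qv1 (qv2 * qv1⁻¹)) *
        PowerSeries.rescale qv2⁻¹ (dPoch (qv1 * qv2⁻¹) qv2) =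
      dPoch qv1 (qv2 * qv1⁻¹) * dPoch (qv1 * qv2⁻¹) qv2 := by
  rw [rescale_dPoch_mul_rescale_dPoch qv1_ne_zero qv2_ne_zero qv1_pow_succ_ne_one
      qv2_pow_succ_ne_one qv1_pow_succ_ne_qv2_pow_succ,
    dPoch_mul_dPoch qv1_ne_zero qv2_ne_zero qv1_pow_succ_ne_one qv2_pow_succ_ne_one
      qv1_pow_succ_ne_qv2_pow_succ]
end

section
/- Let q be a complex number with |q| ≠ 1, m, n positive integers, and u a nonzero complex number with u ≠ q^k for all integers k. Then the instanton part of the 5d pure SU(2) Nekrasov partition function Z_inst(u; q^{-m}, q^n | z) = ∑_{λ⁽¹⁾,λ⁽²⁾} (q^{m-n} z)^{|λ⁽¹⁾|+|λ⁽²⁾|} / ∏_{i,j=1}^2 N_{λ⁽ⁱ⁾,λ⁽ʲ⁾}(u_i/u_j; q^{-m}, q^n), with u₁/u₂ = u, u₂/u₁ = u^{-1}, u₁/u₁ = u₂/u₂ = 1, converges absolutely for every z ∈ ℂ, and moreover is bounded by exp(C|z|) for an explicit constant C depending only on q, m, n, u. -/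
open scoped BigOperators

/-- Arm length (as an integer, possibly negative) of the box `s` with respect to the
Young diagram `μ`: `a_μ(s) = μ_{s₁} − s₂ − 1` in 0-indexed conventions. -/
def armZ (μ : YoungDiagram) (s : ℕ × ℕ) : ℤ := (μ.rowLen s.1 : ℤ) - s.2 - 1

/-- Leg length (as an integer, possibly negative) of the box `s` with respect to the
Young diagram `μ`. -/
def legZ (μ : YoungDiagram) (s : ℕ × ℕ) : ℤ := (μ.colLen s.2 : ℤ) - s.1 - 1

/-- The Nekrasov factor
`N_{λ,μ}(u; q₁, q₂) = ∏_{s∈λ}(1 − u·q₂^{−a_μ(s)−1}·q₁^{l_λ(s)}) ·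
∏_{s∈μ}(1 − u·q₂^{a_λ(s)}·q₁^{−l_μ(s)−1})`. -/
noncomputable def nekrasovFactor (u q₁ q₂ : ℂ) (lam mu : YoungDiagram) : ℂ :=
  (∏ s ∈ lam.cells, (1 - u * q₂ ^ (-armZ mu s - 1) * q₁ ^ legZ lam s)) *
    ∏ s ∈ mu.cells, (1 - u * q₂ ^ armZ lam s * q₁ ^ (-legZ mu s - 1))

/-- The summand of the 5d pure `SU(2)` instanton partition function
`Z_inst(u; q^{-m}, q^{n} | z)` attached to a pair of partitions
`P = (λ⁽¹⁾, λ⁽²⁾)`: `(q^{m-n} z)^{|λ⁽¹⁾|+|λ⁽²⁾|} / ∏_{i,j=1}^2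
N_{λ⁽ⁱ⁾,λ⁽ʲ⁾}(u_i/u_j; q^{-m}, q^{n})` with `u₁/u₂ = u`. -/
noncomputable def zInstTerm (u q z : ℂ) (m n : ℕ)
    (P : YoungDiagram × YoungDiagram) : ℂ :=
  (q ^ ((m : ℤ) - (n : ℤ)) * z) ^ (P.1.card + P.2.card) /
    (nekrasovFactor 1 (q ^ (-(m : ℤ))) (q ^ (n : ℤ)) P.1 P.1 *
      nekrasovFactor u (q ^ (-(m : ℤ))) (q ^ (n : ℤ)) P.1 P.2 *
      nekrasovFactor u⁻¹ (q ^ (-(m : ℤ))) (q ^ (n : ℤ)) P.2 P.1 *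
      nekrasovFactor 1 (q ^ (-(m : ℤ))) (q ^ (n : ℤ)) P.2 P.2)

/-! For a box with arm `a` and leg `l`, the two factors it contributes to
`N_{λ,λ}(1; q^{-m}, q^n)` are `1 - q^{-(n(a+1)+ml)}` and `1 - q^{na+m(l+1)}`: one power of `q`
tends to `0` and the other to `∞`, so their product is at least `δ σ^{c h}` with
`σ = max |q| |q|⁻¹ > 1`, `c = min m n` and `h` the hook length. The hook sum `H` of a diagram
with `k` boxes satisfies `k⁴ ≤ 8 H³` (Cauchy–Schwarz over the rows, plus the first column), and
this makes `σ^{cH}` beat `k!` up to a geometric factor. Since `u ≠ q^k`, `|1 - u q^E|` is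
bounded away from `0` uniformly in `E`, so the off-diagonal factors are at least
`ε^{|λ|+|μ|}`. Hence the `(λ, μ)` term is at most `(C|z|)^{|λ|}/|λ|! · (C|z|)^{|μ|}/|μ|!`, and as
there are at most `2^k` partitions of `k`, the whole sum is at most `exp(4C|z|)`. -/

open Finset
open scoped Nat

theorem sq_le_two_mul_sum_range_sub (L : ℕ) : L ^ 2 ≤ 2 * ∑ j ∈ range L, (L - j) := by
  induction L with
  | zero => simp
  | succ L ih =>
    rw [sum_range_succ']
    have : ∑ j ∈ range L, (L + 1 - (j + 1)) = ∑ j ∈ range L, (L - j) := by simp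
    rw [this, Nat.sub_zero]
    nlinarith

theorem sum_pow_div_factorial_le_exp (s : Finset ℕ) {y : ℝ} (hy : 0 ≤ y) :
    ∑ k ∈ s, y ^ k / k ! ≤ Real.exp y :=
  (sum_le_sum_of_subset_of_nonneg
      (fun k hk => mem_range.2 (Nat.lt_succ_of_le (le_sup (f := id) hk)))
      fun _ _ _ => by positivity).trans
    (Real.sum_le_exp_of_nonneg hy _)

theorem factorial_le_of_pow_four_le {b : ℝ} (hb : 1 < b) {k H : ℕ} (h : k ^ 4 ≤ 8 * H ^ 3) :
    (k ! : ℝ) ≤ (216 / Real.log b ^ 3) ^ k * b ^ H := by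
  set L := Real.log b
  have hL : 0 < L := Real.log_pos hb
  -- `k! (3k)! ≤ k^k (3k)^{3k} ≤ 216^k H^{3k}`, and `(L H)^{3k} / (3k)! ≤ exp (L H) = b^H`.
  have hnat : k ! * (3 * k) ! ≤ 216 ^ k * H ^ (3 * k) :=
    calc k ! * (3 * k) ! ≤ k ^ k * (3 * k) ^ (3 * k) :=
          Nat.mul_le_mul (Nat.factorial_le_pow k) (Nat.factorial_le_pow _)
      _ = 27 ^ k * (k ^ 4) ^ k := by rw [mul_pow, pow_mul 3 3 k]; ring
      _ ≤ 27 ^ k * (8 * H ^ 3) ^ k := by gcongr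
      _ = 216 ^ k * H ^ (3 * k) := by
          rw [mul_pow, ← mul_assoc, ← mul_pow, pow_mul H 3 k]; norm_num
  have hexp : b ^ H = Real.exp (L * H) := by
    rw [mul_comm, Real.exp_nat_mul, Real.exp_log (by linarith)]
  have htail : (L * H) ^ (3 * k) ≤ (3 * k) ! * Real.exp (L * H) := by
    have := Real.pow_div_factorial_le_exp _ (by positivity : 0 ≤ L * H) (3 * k)
    rwa [div_le_iff₀' (by positivity)] at this
  refine le_of_mul_le_mul_right ?_ (by positivity : (0 : ℝ) < (3 * k) !)
  calc (k ! : ℝ) * (3 * k) ! ≤ 216 ^ k * H ^ (3 * k) := by exact_mod_cast hnat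
    _ = (216 / L ^ 3) ^ k * (L * H) ^ (3 * k) := by
        rw [div_pow, mul_pow, ← pow_mul]; field_simp
    _ ≤ (216 / L ^ 3) ^ k * ((3 * k) ! * Real.exp (L * H)) := by gcongr
    _ = (216 / L ^ 3) ^ k * b ^ H * (3 * k) ! := by rw [hexp]; ring

namespace YoungDiagram

def hookLength (μ : YoungDiagram) (s : ℕ × ℕ) : ℕ :=
  μ.rowLen s.1 - s.2 + (μ.colLen s.2 - s.1) - 1

def hookSum (μ : YoungDiagram) : ℕ := ∑ s ∈ μ.cells, μ.hookLength s

theorem hookLength_eq_armZ_add_legZ {μ : YoungDiagram} {s : ℕ × ℕ} (hs : s ∈ μ) :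
    (μ.hookLength s : ℤ) = armZ μ s + legZ μ s + 1 := by
  have := mem_iff_lt_rowLen.1 hs
  have := mem_iff_lt_colLen.1 hs
  simp only [hookLength, armZ, legZ]
  omega

theorem rowLen_sub_le_hookLength {μ : YoungDiagram} {i j : ℕ} (h : (i, j) ∈ μ) :
    μ.rowLen i - j ≤ μ.hookLength (i, j) := by
  have := mem_iff_lt_colLen.1 h
  simp only [hookLength]
  omega

theorem colLen_sub_le_hookLength {μ : YoungDiagram} {i j : ℕ} (h : (i, j) ∈ μ) :
    μ.colLen j - i ≤ μ.hookLength (i, j) := by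
  have := mem_iff_lt_rowLen.1 h
  simp only [hookLength]
  omega

theorem sum_cells_eq_sum_range_rowLen {M : Type*} [AddCommMonoid M] (μ : YoungDiagram)
    (f : ℕ × ℕ → M) :
    ∑ s ∈ μ.cells, f s = ∑ i ∈ range (μ.colLen 0), ∑ j ∈ range (μ.rowLen i), f (i, j) := by
  have hrow : ∀ s ∈ μ.cells, s.1 ∈ range (μ.colLen 0) := fun s hs =>
    mem_range.2 <| mem_iff_lt_colLen.1 <|
      μ.up_left_mem le_rfl (Nat.zero_le s.2) ((mem_cells s).1 hs)
  rw [← sum_fiberwise_of_maps_to hrow]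
  refine sum_congr rfl fun i _ => ?_
  change ∑ s ∈ μ.row i, f s = _
  rw [row_eq_prod, sum_product, sum_singleton]

theorem card_eq_sum_rowLen (μ : YoungDiagram) :
    μ.card = ∑ i ∈ range (μ.colLen 0), μ.rowLen i := by
  rw [YoungDiagram.card, card_eq_sum_ones, sum_cells_eq_sum_range_rowLen]
  simp

theorem sum_rowLens (μ : YoungDiagram) : μ.rowLens.sum = μ.card := by
  rw [card_eq_sum_rowLen, rowLens, ← List.sum_toFinset _ List.nodup_range, List.toFinset_range]

theorem sum_rowLen_sq_le_two_mul_hookSum (μ : YoungDiagram) :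
    ∑ i ∈ range (μ.colLen 0), μ.rowLen i ^ 2 ≤ 2 * μ.hookSum := by
  rw [hookSum, sum_cells_eq_sum_range_rowLen, mul_sum]
  refine sum_le_sum fun i _ => (sq_le_two_mul_sum_range_sub _).trans ?_
  gcongr with j hj
  exact rowLen_sub_le_hookLength (mem_iff_lt_rowLen.2 (mem_range.1 hj))

theorem colLen_zero_sq_le_two_mul_hookSum (μ : YoungDiagram) :
    μ.colLen 0 ^ 2 ≤ 2 * μ.hookSum := by
  rw [hookSum, sum_cells_eq_sum_range_rowLen]
  refine (sq_le_two_mul_sum_range_sub _).trans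
    (Nat.mul_le_mul_left 2 (sum_le_sum fun i hi => ?_))
  have h0 : (i, 0) ∈ μ := mem_iff_lt_colLen.2 (mem_range.1 hi)
  exact (colLen_sub_le_hookLength h0).trans <|
    single_le_sum (f := fun j => μ.hookLength (i, j)) (fun _ _ => Nat.zero_le _)
      (mem_range.2 (mem_iff_lt_rowLen.1 h0))

theorem card_pow_four_le_eight_mul_hookSum_pow_three (μ : YoungDiagram) :
    μ.card ^ 4 ≤ 8 * μ.hookSum ^ 3 := by
  have hcs : μ.card ^ 2 ≤ μ.colLen 0 * ∑ i ∈ range (μ.colLen 0), μ.rowLen i ^ 2 := by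
    simpa [card_eq_sum_rowLen] using
      sq_sum_le_card_mul_sum_sq (s := range (μ.colLen 0)) (f := μ.rowLen)
  have hrow := μ.sum_rowLen_sq_le_two_mul_hookSum
  have hcol := μ.colLen_zero_sq_le_two_mul_hookSum
  calc μ.card ^ 4 = (μ.card ^ 2) ^ 2 := by ring
    _ ≤ (μ.colLen 0 * (2 * μ.hookSum)) ^ 2 := by gcongr; exact hcs.trans (by gcongr)
    _ = 4 * μ.colLen 0 ^ 2 * μ.hookSum ^ 2 := by ring
    _ ≤ 4 * (2 * μ.hookSum) * μ.hookSum ^ 2 := by gcongr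
    _ = 8 * μ.hookSum ^ 3 := by ring

theorem card_filter_card_eq_le_two_pow (V : Finset YoungDiagram) (k : ℕ) :
    #{μ ∈ V | μ.card = k} ≤ 2 ^ k := by
  have hmaps : ∀ μ ∈ {μ ∈ V | μ.card = k},
      μ.rowLens ∈ (univ : Finset (Composition k)).image Composition.blocks := fun μ hμ =>
    mem_image.2 ⟨⟨μ.rowLens, fun hx => μ.pos_of_mem_rowLens _ hx,
      μ.sum_rowLens.trans (mem_filter.1 hμ).2⟩, mem_univ _, rfl⟩
  have hinj : Set.InjOn rowLens ↑({μ ∈ V | μ.card = k} : Finset _) := fun μ _ ν _ h =>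
    equivListRowLens.injective (Subtype.ext h)
  calc #{μ ∈ V | μ.card = k}
      ≤ #((univ : Finset (Composition k)).image Composition.blocks) :=
        card_le_card_of_injOn _ hmaps hinj
    _ ≤ 2 ^ (k - 1) := card_image_le.trans (by rw [card_univ, composition_card])
    _ ≤ 2 ^ k := Nat.pow_le_pow_right two_pos (Nat.sub_le k 1)

end YoungDiagram

theorem armZ_nonneg {μ : YoungDiagram} {s : ℕ × ℕ} (hs : s ∈ μ) : 0 ≤ armZ μ s := by
  have := YoungDiagram.mem_iff_lt_rowLen.1 hs
  unfold armZ; omega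

theorem legZ_nonneg {μ : YoungDiagram} {s : ℕ × ℕ} (hs : s ∈ μ) : 0 ≤ legZ μ s := by
  have := YoungDiagram.mem_iff_lt_colLen.1 hs
  unfold legZ; omega

noncomputable def expWeight (x : ℝ) (μ : YoungDiagram) : ℝ := x ^ μ.card / μ.card !

theorem expWeight_nonneg {x : ℝ} (hx : 0 ≤ x) (μ : YoungDiagram) : 0 ≤ expWeight x μ := by
  unfold expWeight; positivity

theorem sum_expWeight_le (V : Finset YoungDiagram) {x : ℝ} (hx : 0 ≤ x) :
    ∑ μ ∈ V, expWeight x μ ≤ Real.exp (2 * x) := by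
  calc ∑ μ ∈ V, expWeight x μ
      = ∑ k ∈ V.image YoungDiagram.card, #{μ ∈ V | μ.card = k} • (x ^ k / k !) :=
        sum_comp (fun k => x ^ k / k !) YoungDiagram.card
    _ ≤ ∑ k ∈ V.image YoungDiagram.card, (2 * x) ^ k / k ! := by
        gcongr with k
        rw [nsmul_eq_mul, mul_pow, mul_div_assoc]
        gcongr
        exact_mod_cast YoungDiagram.card_filter_card_eq_le_two_pow V k
    _ ≤ Real.exp (2 * x) := sum_pow_div_factorial_le_exp _ (by positivity)

theorem summable_expWeight {x : ℝ} (hx : 0 ≤ x) : Summable (expWeight x) :=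
  summable_of_sum_le (expWeight_nonneg hx) fun V => sum_expWeight_le V hx

theorem tsum_expWeight_le {x : ℝ} (hx : 0 ≤ x) : ∑' μ, expWeight x μ ≤ Real.exp (2 * x) :=
  Real.tsum_le_of_sum_le (expWeight_nonneg hx) fun V => sum_expWeight_le V hx

theorem summable_expWeight_mul {x : ℝ} (hx : 0 ≤ x) :
    Summable fun P : YoungDiagram × YoungDiagram => expWeight x P.1 * expWeight x P.2 :=
  (summable_expWeight hx).mul_of_nonneg (summable_expWeight hx) (expWeight_nonneg hx)
    (expWeight_nonneg hx)

theorem tsum_expWeight_mul_le {x : ℝ} (hx : 0 ≤ x) :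
    ∑' P : YoungDiagram × YoungDiagram, expWeight x P.1 * expWeight x P.2 ≤
      Real.exp (4 * x) := by
  rw [← (summable_expWeight hx).tsum_mul_tsum (summable_expWeight hx) (summable_expWeight_mul hx),
    show 4 * x = 2 * x + 2 * x by ring, Real.exp_add]
  have : 0 ≤ ∑' μ, expWeight x μ := tsum_nonneg (expWeight_nonneg hx)
  gcongr <;> exact tsum_expWeight_le hx

section NormedField

variable {𝕜 : Type*} [NormedField 𝕜]

theorem one_sub_inv_le_norm_one_sub {w : 𝕜} {σ : ℝ} (hw : ‖w‖ ≤ σ⁻¹) :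
    1 - σ⁻¹ ≤ ‖1 - w‖ := by
  have := norm_sub_norm_le (1 : 𝕜) w
  rw [norm_one] at this
  linarith

theorem one_sub_inv_mul_le_norm_one_sub {w : 𝕜} {σ t : ℝ} (hσ : 0 < σ) (hσt : σ ≤ t)
    (ht : t ≤ ‖w‖) : (1 - σ⁻¹) * t ≤ ‖1 - w‖ := by
  have h1 : 1 ≤ t * σ⁻¹ := by rwa [le_mul_inv_iff₀ hσ, one_mul]
  have := norm_sub_norm_le w (1 : 𝕜)
  rw [norm_one, norm_sub_rev] at this
  nlinarith

theorem one_sub_inv_sq_mul_pow_le_norm_one_sub_zpow_mul_of_one_lt {q : 𝕜} (hq : 1 < ‖q‖)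
    {A B : ℤ} {c : ℕ} (hc : 1 ≤ c) (hA : (c : ℤ) ≤ A) (hB : (c : ℤ) ≤ B) :
    (1 - ‖q‖⁻¹) ^ 2 * ‖q‖ ^ c ≤ ‖1 - q ^ (-A)‖ * ‖1 - q ^ B‖ := by
  have hδ : 0 ≤ 1 - ‖q‖⁻¹ := sub_nonneg.2 (inv_le_one_of_one_le₀ hq.le)
  have hsmall : 1 - ‖q‖⁻¹ ≤ ‖1 - q ^ (-A)‖ := by
    refine one_sub_inv_le_norm_one_sub ?_
    rw [norm_zpow, ← zpow_neg_one]
    exact zpow_le_zpow_right₀ hq.le (by omega)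
  have hlarge : (1 - ‖q‖⁻¹) * ‖q‖ ^ c ≤ ‖1 - q ^ B‖ := by
    refine one_sub_inv_mul_le_norm_one_sub (by linarith) (le_self_pow₀ hq.le (by omega)) ?_
    rw [norm_zpow, ← zpow_natCast]
    exact zpow_le_zpow_right₀ hq.le hB
  calc (1 - ‖q‖⁻¹) ^ 2 * ‖q‖ ^ c = (1 - ‖q‖⁻¹) * ((1 - ‖q‖⁻¹) * ‖q‖ ^ c) := by ring
    _ ≤ ‖1 - q ^ (-A)‖ * ‖1 - q ^ B‖ := by gcongr

theorem exists_one_lt_one_sub_inv_sq_mul_pow_le_norm_one_sub_zpow_mul {q : 𝕜} (hq0 : q ≠ 0)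
    (hq : ‖q‖ ≠ 1) :
    ∃ σ > 1, ∀ (A B : ℤ) (c : ℕ), 1 ≤ c → (c : ℤ) ≤ A → (c : ℤ) ≤ B →
      (1 - σ⁻¹) ^ 2 * σ ^ c ≤ ‖1 - q ^ (-A)‖ * ‖1 - q ^ B‖ := by
  rcases hq.lt_or_gt with hlt | hgt
  · have hinv : 1 < ‖q⁻¹‖ := by
      rw [norm_inv]; exact (one_lt_inv₀ (norm_pos_iff.2 hq0)).2 hlt
    refine ⟨‖q⁻¹‖, hinv, fun A B c hc hA hB => ?_⟩
    have := one_sub_inv_sq_mul_pow_le_norm_one_sub_zpow_mul_of_one_lt hinv hc hB hA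
    rw [inv_zpow', neg_neg, inv_zpow'] at this
    rwa [mul_comm ‖1 - q ^ B‖] at this
  · exact ⟨‖q‖, hgt, fun A B c => one_sub_inv_sq_mul_pow_le_norm_one_sub_zpow_mul_of_one_lt hgt⟩

theorem inv_two_le_norm_one_sub_mul_zpow {q u : 𝕜} (hq : 1 ≤ ‖q‖) {N : ℕ}
    (hsmall : 2 * ‖u‖ ≤ ‖q‖ ^ N) (hlarge : 2 ≤ ‖u‖ * ‖q‖ ^ N) {E : ℤ}
    (hE : E ∉ Icc (-N : ℤ) N) : 2⁻¹ ≤ ‖1 - u * q ^ E‖ := by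
  have hNpos : 0 < ‖q‖ ^ N := pow_pos (by linarith) N
  simp only [mem_Icc, not_and_or, not_le] at hE
  rcases hE with hE | hE
  · have hw : ‖u * q ^ E‖ ≤ 2⁻¹ :=
      calc ‖u * q ^ E‖ ≤ ‖u‖ / ‖q‖ ^ N := by
            rw [norm_mul, norm_zpow, div_eq_mul_inv, ← zpow_natCast, ← zpow_neg]
            gcongr
        _ ≤ 2⁻¹ := by rw [div_le_iff₀ hNpos]; linarith
    have := one_sub_inv_le_norm_one_sub hw
    norm_num at this ⊢
    linarith
  · have hw : 2 ≤ ‖u * q ^ E‖ :=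
      calc (2 : ℝ) ≤ ‖u‖ * ‖q‖ ^ N := hlarge
        _ ≤ ‖u * q ^ E‖ := by
            rw [norm_mul, norm_zpow, ← zpow_natCast]
            gcongr
    have := one_sub_inv_mul_le_norm_one_sub two_pos le_rfl hw
    norm_num at this ⊢
    linarith

theorem exists_pos_le_norm_one_sub_mul_zpow_of_one_lt {q u : 𝕜} (hq : 1 < ‖q‖) (hu0 : u ≠ 0)
    (hu : ∀ k : ℤ, u ≠ q ^ k) : ∃ ε > 0, ∀ E : ℤ, ε ≤ ‖1 - u * q ^ E‖ := by
  have hpos (E : ℤ) : 0 < ‖1 - u * q ^ E‖ := by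
    refine norm_pos_iff.2 fun h => hu (-E) ?_
    rw [zpow_neg]
    exact eq_inv_of_mul_eq_one_left (sub_eq_zero.1 h).symm
  have hu' : 0 < ‖u‖ := norm_pos_iff.2 hu0
  obtain ⟨N, hN⟩ := pow_unbounded_of_one_lt (2 * ‖u‖ + 2 / ‖u‖) hq
  have hlarge : 2 ≤ ‖u‖ * ‖q‖ ^ N := by
    have : 2 / ‖u‖ ≤ ‖q‖ ^ N := by linarith [mul_pos two_pos hu']
    rwa [div_le_iff₀' hu'] at this
  refine ⟨min 2⁻¹ ((Icc (-N : ℤ) N).inf' ⟨0, by simp⟩ fun E => ‖1 - u * q ^ E‖),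
    lt_min (by norm_num) ((lt_inf'_iff _).2 fun E _ => hpos E), fun E => ?_⟩
  by_cases hE : E ∈ Icc (-N : ℤ) N
  · exact (min_le_right _ _).trans (inf'_le _ hE)
  · exact (min_le_left _ _).trans <| inv_two_le_norm_one_sub_mul_zpow hq.le
      (by linarith [div_pos two_pos hu']) hlarge hE

theorem exists_pos_le_norm_one_sub_mul_zpow {q u : 𝕜} (hq0 : q ≠ 0) (hq : ‖q‖ ≠ 1)
    (hu0 : u ≠ 0) (hu : ∀ k : ℤ, u ≠ q ^ k) : ∃ ε > 0, ∀ E : ℤ, ε ≤ ‖1 - u * q ^ E‖ := by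
  rcases hq.lt_or_gt with hlt | hgt
  · have hinv : 1 < ‖q⁻¹‖ := by
      rw [norm_inv]; exact (one_lt_inv₀ (norm_pos_iff.2 hq0)).2 hlt
    obtain ⟨ε, hε, hbound⟩ := exists_pos_le_norm_one_sub_mul_zpow_of_one_lt hinv hu0
      fun k hk => hu (-k) (by rwa [inv_zpow'] at hk)
    exact ⟨ε, hε, fun E => by simpa [inv_zpow'] using hbound (-E)⟩
  · exact exists_pos_le_norm_one_sub_mul_zpow_of_one_lt hgt hu0 hu

end NormedField

theorem zpow_natCast_zpow_mul_zpow_neg_natCast_zpow {G : Type*} [GroupWithZero G] {q : G}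
    (hq0 : q ≠ 0) (m n : ℕ) (x y : ℤ) :
    (q ^ (n : ℤ)) ^ x * (q ^ (-(m : ℤ))) ^ y = q ^ (n * x - m * y) := by
  rw [← zpow_mul, ← zpow_mul, ← zpow_add₀ hq0]
  ring_nf

theorem pow_card_add_card_le_norm_nekrasovFactor {v q₁ q₂ : ℂ} {ε : ℝ} (hε : 0 ≤ ε)
    (h : ∀ x y : ℤ, ε ≤ ‖1 - v * q₂ ^ x * q₁ ^ y‖) (lam mu : YoungDiagram) :
    ε ^ (lam.card + mu.card) ≤ ‖nekrasovFactor v q₁ q₂ lam mu‖ := by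
  rw [nekrasovFactor, norm_mul, norm_prod, norm_prod, pow_add, ← prod_const, ← prod_const]
  gcongr with s _ s _
  · exact h _ _
  · exact h _ _

theorem exists_pos_pow_card_add_card_le_norm_nekrasovFactor {q u : ℂ} (hq0 : q ≠ 0)
    (hq : ‖q‖ ≠ 1) (hu0 : u ≠ 0) (hu : ∀ k : ℤ, u ≠ q ^ k) (m n : ℕ) :
    ∃ ε > 0, ∀ lam mu : YoungDiagram, ε ^ (lam.card + mu.card) ≤
      ‖nekrasovFactor u (q ^ (-(m : ℤ))) (q ^ (n : ℤ)) lam mu‖ := by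
  obtain ⟨ε, hε, hbound⟩ := exists_pos_le_norm_one_sub_mul_zpow hq0 hq hu0 hu
  refine ⟨ε, hε, pow_card_add_card_le_norm_nekrasovFactor hε.le fun x y => ?_⟩
  rw [mul_assoc, zpow_natCast_zpow_mul_zpow_neg_natCast_zpow hq0]
  exact hbound _

theorem exists_pow_card_mul_pow_hookSum_le_norm_nekrasovFactor_self {q : ℂ} (hq0 : q ≠ 0)
    (hq : ‖q‖ ≠ 1) {m n : ℕ} (hm : 1 ≤ m) (hn : 1 ≤ n) :
    ∃ δ > 0, ∃ b > 1, ∀ μ : YoungDiagram,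
      δ ^ μ.card * b ^ μ.hookSum ≤ ‖nekrasovFactor 1 (q ^ (-(m : ℤ))) (q ^ (n : ℤ)) μ μ‖ := by
  obtain ⟨σ, hσ, hbox⟩ := exists_one_lt_one_sub_inv_sq_mul_pow_le_norm_one_sub_zpow_mul hq0 hq
  have hδ : 0 < 1 - σ⁻¹ := sub_pos.2 (inv_lt_one_of_one_lt₀ hσ)
  refine ⟨(1 - σ⁻¹) ^ 2, by positivity, σ ^ min m n, one_lt_pow₀ hσ (by omega), fun μ => ?_⟩
  rw [nekrasovFactor, ← prod_mul_distrib, norm_prod, YoungDiagram.card, ← prod_const,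
    YoungDiagram.hookSum, ← prod_pow_eq_pow_sum, ← prod_mul_distrib]
  refine prod_le_prod (fun _ _ => by positivity) fun s hs => ?_
  have ha := armZ_nonneg hs
  have hl := legZ_nonneg hs
  have hh := YoungDiagram.hookLength_eq_armZ_add_legZ hs
  rw [norm_mul, one_mul, one_mul, zpow_natCast_zpow_mul_zpow_neg_natCast_zpow hq0,
    zpow_natCast_zpow_mul_zpow_neg_natCast_zpow hq0, ← pow_mul,
    show (n : ℤ) * (-armZ μ s - 1) - m * legZ μ s = -(n * (armZ μ s + 1) + m * legZ μ s) by ring,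
    show (n : ℤ) * armZ μ s - m * (-legZ μ s - 1) = n * armZ μ s + m * (legZ μ s + 1) by ring]
  have hmin : min (m : ℤ) n ≤ m ∧ min (m : ℤ) n ≤ n := ⟨min_le_left _ _, min_le_right _ _⟩
  refine hbox _ _ _ (Nat.mul_le_mul (by omega : 1 ≤ min m n) (by omega : 1 ≤ μ.hookLength s))
    ?_ ?_ <;> push_cast <;> rw [hh] <;>
    nlinarith [mul_le_mul_of_nonneg_right hmin.1 hl, mul_le_mul_of_nonneg_right hmin.2 ha]

theorem exists_pos_pow_card_mul_factorial_le_norm_nekrasovFactor_self {q : ℂ} (hq0 : q ≠ 0)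
    (hq : ‖q‖ ≠ 1) {m n : ℕ} (hm : 1 ≤ m) (hn : 1 ≤ n) :
    ∃ D > 0, ∀ μ : YoungDiagram,
      D ^ μ.card * μ.card ! ≤ ‖nekrasovFactor 1 (q ^ (-(m : ℤ))) (q ^ (n : ℤ)) μ μ‖ := by
  obtain ⟨δ, hδ, b, hb, hN⟩ :=
    exists_pow_card_mul_pow_hookSum_le_norm_nekrasovFactor_self hq0 hq hm hn
  have hL : 0 < Real.log b := Real.log_pos hb
  refine ⟨δ * (Real.log b ^ 3 / 216), by positivity, fun μ => le_trans ?_ (hN μ)⟩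
  calc (δ * (Real.log b ^ 3 / 216)) ^ μ.card * μ.card !
      ≤ (δ * (Real.log b ^ 3 / 216)) ^ μ.card *
          ((216 / Real.log b ^ 3) ^ μ.card * b ^ μ.hookSum) := by
        gcongr
        exact factorial_le_of_pow_four_le hb μ.card_pow_four_le_eight_mul_hookSum_pow_three
    _ = δ ^ μ.card * b ^ μ.hookSum := by
        rw [← mul_assoc, ← mul_pow, mul_assoc, div_mul_div_cancel₀ (by positivity),
          div_self (by positivity), mul_one]

theorem norm_zInstTerm_le {q u : ℂ} {m n : ℕ} {D ε₁ ε₂ : ℝ} (hD : 0 < D) (hε₁ : 0 < ε₁)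
    (hε₂ : 0 < ε₂)
    (hdiag : ∀ μ : YoungDiagram,
      D ^ μ.card * μ.card ! ≤ ‖nekrasovFactor 1 (q ^ (-(m : ℤ))) (q ^ (n : ℤ)) μ μ‖)
    (hcross₁ : ∀ lam mu : YoungDiagram, ε₁ ^ (lam.card + mu.card) ≤
      ‖nekrasovFactor u (q ^ (-(m : ℤ))) (q ^ (n : ℤ)) lam mu‖)
    (hcross₂ : ∀ lam mu : YoungDiagram, ε₂ ^ (lam.card + mu.card) ≤
      ‖nekrasovFactor u⁻¹ (q ^ (-(m : ℤ))) (q ^ (n : ℤ)) lam mu‖)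
    (z : ℂ) (P : YoungDiagram × YoungDiagram) :
    ‖zInstTerm u q z m n P‖ ≤
      expWeight (‖q ^ ((m : ℤ) - n)‖ / (D * ε₁ * ε₂) * ‖z‖) P.1 *
        expWeight (‖q ^ ((m : ℤ) - n)‖ / (D * ε₁ * ε₂) * ‖z‖) P.2 := by
  obtain ⟨lam, mu⟩ := P
  have hden : (D ^ lam.card * lam.card !) * ε₁ ^ (lam.card + mu.card) *
      ε₂ ^ (mu.card + lam.card) * (D ^ mu.card * mu.card !) ≤
      ‖nekrasovFactor 1 (q ^ (-(m : ℤ))) (q ^ (n : ℤ)) lam lam *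
        nekrasovFactor u (q ^ (-(m : ℤ))) (q ^ (n : ℤ)) lam mu *
        nekrasovFactor u⁻¹ (q ^ (-(m : ℤ))) (q ^ (n : ℤ)) mu lam *
        nekrasovFactor 1 (q ^ (-(m : ℤ))) (q ^ (n : ℤ)) mu mu‖ := by
    simp only [norm_mul]
    gcongr
    exacts [hdiag lam, hcross₁ lam mu, hcross₂ mu lam, hdiag mu]
  rw [zInstTerm, norm_div, norm_pow, norm_mul]
  refine (div_le_div_of_nonneg_left (by positivity) (by positivity) hden).trans_eq ?_
  simp only [expWeight, div_pow, pow_add, mul_pow]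
  field_simp

/-- For `|q| ≠ 1`, positive integers `m, n`, and `u ≠ 0` with `u ≠ q^k`
for all integers `k`, the instanton sum `Z_inst(u; q^{-m}, q^{n} | z)` converges
absolutely for every `z ∈ ℂ` and is bounded by `exp(C|z|)` for a constant `C`
depending only on `q, m, n, u`. -/
theorem zInst_converges (q u : ℂ) (m n : ℕ) (hm : 1 ≤ m) (hn : 1 ≤ n)
    (hq : ‖q‖ ≠ 1) (hq0 : q ≠ 0) (hu0 : u ≠ 0)
    (hu : ∀ k : ℤ, u ≠ q ^ k) :
    (∀ z : ℂ, Summable fun P : YoungDiagram × YoungDiagram =>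
        ‖zInstTerm u q z m n P‖) ∧
      ∃ C : ℝ, 0 < C ∧ ∀ z : ℂ,
        ‖∑' P : YoungDiagram × YoungDiagram, zInstTerm u q z m n P‖ ≤
          Real.exp (C * ‖z‖) := by
  obtain ⟨D, hD, hdiag⟩ :=
    exists_pos_pow_card_mul_factorial_le_norm_nekrasovFactor_self hq0 hq hm hn
  obtain ⟨ε₁, hε₁, hcross₁⟩ :=
    exists_pos_pow_card_add_card_le_norm_nekrasovFactor hq0 hq hu0 hu m n
  obtain ⟨ε₂, hε₂, hcross₂⟩ := exists_pos_pow_card_add_card_le_norm_nekrasovFactor hq0 hq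
    (inv_ne_zero hu0) (fun k hk => hu (-k) (by rw [zpow_neg, ← hk, inv_inv])) m n
  set K := ‖q ^ ((m : ℤ) - n)‖ / (D * ε₁ * ε₂)
  have hK : 0 < K := by
    have := norm_pos_iff.2 (zpow_ne_zero ((m : ℤ) - n) hq0)
    positivity
  have hbound := norm_zInstTerm_le hD hε₁ hε₂ hdiag hcross₁ hcross₂
  have hsum (z : ℂ) : Summable fun P => ‖zInstTerm u q z m n P‖ :=
    (summable_expWeight_mul (by positivity)).of_nonneg_of_le (fun _ => norm_nonneg _) (hbound z)
  refine ⟨hsum, 4 * K, by positivity, fun z => ?_⟩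
  calc ‖∑' P, zInstTerm u q z m n P‖ ≤ ∑' P, ‖zInstTerm u q z m n P‖ :=
        norm_tsum_le_tsum_norm (hsum z)
    _ ≤ ∑' P : YoungDiagram × YoungDiagram,
          expWeight (K * ‖z‖) P.1 * expWeight (K * ‖z‖) P.2 :=
        (hsum z).tsum_le_tsum (hbound z) (summable_expWeight_mul (by positivity))
    _ ≤ Real.exp (4 * K * ‖z‖) := by
        rw [mul_assoc]; exact tsum_expWeight_mul_le (by positivity)
end

section
/- The Nekrasov factor satisfies the transpose symmetry N_{λ,μ}(u; q₁, q₂) = N_{λ',μ'}(u; q₂, q₁), where λ', μ' are conjugate partitions. Consequently the level-0 instanton sum Z_inst(u; q₁, q₂ | z) is symmetric in q₁ and q₂: Z_inst(u; q₁, q₂ | z) = Z_inst(u; q₂, q₁ | z) as formal power series in z. -/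
open scoped BigOperators

/-- The coefficient of `z^N` in the level-0 instanton sum
`Z_inst(u; q₁, q₂ | z) = ∑_{λ⁽¹⁾,λ⁽²⁾} (q₁⁻¹q₂⁻¹z)^{|λ⁽¹⁾|+|λ⁽²⁾|} /
∏_{i,j=1}^2 N_{λ⁽ⁱ⁾,λ⁽ʲ⁾}(u_i/u_j; q₁, q₂)` (with `u₁u₂ = 1`, `u = u₁/u₂`),
viewed as a formal power series in `z`.  Only finitely many pairs of partitions
contribute to each coefficient. -/
noncomputable def zInstCoeff (u q₁ q₂ : ℂ) (N : ℕ) : ℂ :=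
  ∑' P : YoungDiagram × YoungDiagram,
    if P.1.card + P.2.card = N then
      (q₁⁻¹ * q₂⁻¹) ^ N /
        (nekrasovFactor 1 q₁ q₂ P.1 P.1 * nekrasovFactor u q₁ q₂ P.1 P.2 *
          nekrasovFactor u⁻¹ q₁ q₂ P.2 P.1 * nekrasovFactor 1 q₁ q₂ P.2 P.2)
    else 0

/-!
Write every factor of `N_{μ,ν}(u; q₁, q₂)` as `1 - u q₁^x q₂^y`. The cells `c ∈ μ` contribute
`(x, y) = (l_μ(c), -a_ν(c) - 1)` and the cells `c ∈ ν` contribute `(-l_ν(c) - 1, a_μ(c))`;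
transposing both diagrams and exchanging `q₁, q₂` swaps these two kinds of exponent pairs between
`μ` and `ν`. On `μ ∩ ν` the swap is harmless. On `μ \ ν` the two kinds form the same multiset:
the number of its cells with `(-l_ν - 1, a_μ) = (p, q)` is the mixed second difference in
`(p, q)` of `#(μ ∩ ((p, q) + νᶜ))`, which does not change when `μ, ν` are transposed and `p, q`
exchanged. The instanton sum is then symmetric by reindexing over transposed pairs, which
preserves sizes.
-/

open Finset

namespace YoungDiagram

variable (μ ν : YoungDiagram)

theorem cells_transpose : μ.transpose.cells = μ.cells.map (Equiv.prodComm ℕ ℕ).toEmbedding := by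
  ext c
  simp [mem_transpose, Prod.swap]

theorem card_transpose : μ.transpose.card = μ.card := by
  simp [YoungDiagram.card, cells_transpose]

theorem prod_cells_transpose {M : Type*} [CommMonoid M] (f : ℕ × ℕ → M) :
    ∏ c ∈ μ.transpose.cells, f c = ∏ c ∈ μ.cells, f c.swap := by
  simp [cells_transpose]

theorem lt_rowLen_iff_lt_colLen {i j : ℕ} : j < μ.rowLen i ↔ i < μ.colLen j :=
  mem_iff_lt_rowLen.symm.trans mem_iff_lt_colLen

theorem armZ_transpose (c : ℕ × ℕ) : armZ μ.transpose c.swap = legZ μ c := by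
  simp [armZ, legZ, rowLen_transpose]

theorem legZ_transpose (c : ℕ × ℕ) : legZ μ.transpose c.swap = armZ μ c := by
  simp [armZ, legZ, colLen_transpose]

variable (p q : ℕ)

/-- `μ ∩ ((p, q) + νᶜ)` -/
def shiftSdiff : Finset (ℕ × ℕ) :=
  μ.cells.filter fun c => p ≤ c.1 ∧ q ≤ c.2 ∧ (c.1 - p, c.2 - q) ∉ ν

def overhangRows : Finset ℕ :=
  (range (μ.colLen 0)).filter fun i => p ≤ i ∧ ν.rowLen (i - p) + q < μ.rowLen i

/-- For `c ∈ μ \ ν` this is `(-l_ν(c) - 1, a_μ(c))`, computed in `ℕ`. -/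
def legArm (c : ℕ × ℕ) : ℕ × ℕ := (c.1 - ν.colLen c.2, μ.rowLen c.1 - c.2 - 1)

def legArmCells : Finset (ℕ × ℕ) :=
  (μ.cells \ ν.cells).filter fun c => (p, q) = legArm μ ν c

variable {μ ν p q}

theorem mem_shiftSdiff {c : ℕ × ℕ} : c ∈ shiftSdiff μ ν p q ↔
    c.2 < μ.rowLen c.1 ∧ p ≤ c.1 ∧ q ≤ c.2 ∧ ν.rowLen (c.1 - p) ≤ c.2 - q := by
  obtain ⟨i, j⟩ := c
  simp [shiftSdiff, mem_iff_lt_rowLen]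

theorem mem_overhangRows {i : ℕ} :
    i ∈ overhangRows μ ν p q ↔ p ≤ i ∧ ν.rowLen (i - p) + q < μ.rowLen i := by
  have := μ.lt_rowLen_iff_lt_colLen (i := i) (j := 0)
  simp only [overhangRows, mem_filter, mem_range]
  omega

theorem mem_legArmCells {c : ℕ × ℕ} :
    c ∈ legArmCells μ ν p q ↔ μ.rowLen c.1 = c.2 + q + 1 ∧ c.1 = ν.colLen c.2 + p := by
  obtain ⟨i, j⟩ := c
  rw [legArmCells, mem_filter, mem_sdiff, mem_cells, mem_cells, mem_iff_lt_rowLen,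
    mem_iff_lt_colLen, legArm, Prod.ext_iff]
  dsimp only
  omega

theorem shiftSdiff_transpose : shiftSdiff μ.transpose ν.transpose q p =
    (shiftSdiff μ ν p q).map (Equiv.prodComm ℕ ℕ).toEmbedding := by
  ext ⟨i, j⟩
  simp only [shiftSdiff, mem_transpose, Prod.swap_prod_mk, mem_filter, mem_cells, mem_map_equiv,
    Equiv.prodComm_symm, Equiv.prodComm_apply, and_congr_right_iff]
  tauto

variable (μ ν p q)

theorem card_shiftSdiff_eq :
    #(shiftSdiff μ ν p q) = #(shiftSdiff μ ν p (q + 1)) + #(overhangRows μ ν p q) := by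
  have hsub : shiftSdiff μ ν p (q + 1) ⊆ shiftSdiff μ ν p q := by
    intro c
    simp only [mem_shiftSdiff]
    omega
  rw [← card_sdiff_add_card_eq_card hsub, add_comm]
  congr 1
  apply card_nbij' Prod.fst (fun i => (i, ν.rowLen (i - p) + q)) <;> intro c <;>
    simp only [coe_sdiff, Set.mem_sdiff, mem_coe, mem_shiftSdiff, mem_overhangRows, Prod.ext_iff]
  all_goals grind

theorem card_overhangRows_eq :
    #(overhangRows μ ν p q) = #(overhangRows μ ν (p + 1) q) + #(legArmCells μ ν p q) := by
  have hsub : overhangRows μ ν (p + 1) q ⊆ overhangRows μ ν p q := by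
    intro i
    have := ν.rowLen_anti (i - (p + 1)) (i - p) (by omega)
    simp only [mem_overhangRows]
    omega
  rw [← card_sdiff_add_card_eq_card hsub, add_comm]
  congr 1
  apply card_nbij' (fun i => (i, μ.rowLen i - q - 1)) Prod.fst
  · intro i
    have h₁ := ν.lt_rowLen_iff_lt_colLen (i := i - p) (j := μ.rowLen i - q - 1)
    have h₂ := ν.lt_rowLen_iff_lt_colLen (i := i - (p + 1)) (j := μ.rowLen i - q - 1)
    simp only [coe_sdiff, Set.mem_sdiff, mem_coe, mem_overhangRows, mem_legArmCells]
    omega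
  · intro c
    have h₁ := ν.lt_rowLen_iff_lt_colLen (i := c.1 - p) (j := c.2)
    have h₂ := ν.lt_rowLen_iff_lt_colLen (i := c.1 - (p + 1)) (j := c.2)
    simp only [coe_sdiff, Set.mem_sdiff, mem_coe, mem_overhangRows, mem_legArmCells]
    omega
  · intro i _
    rfl
  · intro c
    simp only [mem_coe, mem_legArmCells, Prod.ext_iff]
    grind

theorem card_legArmCells_transpose :
    #(legArmCells μ ν p q) = #(legArmCells μ.transpose ν.transpose q p) := by
  have := card_shiftSdiff_eq μ ν p q
  have := card_shiftSdiff_eq μ ν (p + 1) q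
  have := card_overhangRows_eq μ ν p q
  have := card_shiftSdiff_eq μ.transpose ν.transpose q p
  have := card_shiftSdiff_eq μ.transpose ν.transpose (q + 1) p
  have := card_overhangRows_eq μ.transpose ν.transpose q p
  simp only [shiftSdiff_transpose, card_map] at *
  omega

theorem map_legArm_sdiff (μ ν : YoungDiagram) :
    (μ.cells \ ν.cells).val.map (legArm μ ν) =
      (μ.cells \ ν.cells).val.map fun c => (legArm μ.transpose ν.transpose c.swap).swap := by
  ext ⟨p, q⟩
  rw [Multiset.count_map, Multiset.count_map]
  change #(legArmCells μ ν p q) = #((μ.cells \ ν.cells).filter fun c => _)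
  rw [card_legArmCells_transpose]
  apply card_nbij' Prod.swap Prod.swap <;> intro c <;>
    simp [legArmCells, mem_transpose, Prod.ext_iff, and_comm]

theorem prod_sdiff_legZ_armZ {M : Type*} [CommMonoid M] (f : ℤ → ℤ → M) (μ ν : YoungDiagram) :
    ∏ c ∈ μ.cells \ ν.cells, f (legZ μ c) (-armZ ν c - 1) =
      ∏ c ∈ μ.cells \ ν.cells, f (-legZ ν c - 1) (armZ μ c) := by
  set F : ℕ × ℕ → M := fun e => f e.1 e.2
  have hA : ∀ c ∈ μ.cells \ ν.cells, f (legZ μ c) (-armZ ν c - 1) =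
      F (legArm μ.transpose ν.transpose c.swap).swap := by
    rintro ⟨i, j⟩ hc
    rw [mem_sdiff, mem_cells, mem_cells, mem_iff_lt_colLen, mem_iff_lt_rowLen] at hc
    simp only [F, legArm, legZ, armZ, Prod.swap, rowLen_transpose, colLen_transpose]
    congr 1 <;> omega
  have hB : ∀ c ∈ μ.cells \ ν.cells, f (-legZ ν c - 1) (armZ μ c) = F (legArm μ ν c) := by
    rintro ⟨i, j⟩ hc
    rw [mem_sdiff, mem_cells, mem_cells, mem_iff_lt_rowLen, mem_iff_lt_colLen] at hc
    simp only [F, legArm, legZ, armZ]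
    congr 1 <;> omega
  rw [prod_congr rfl hA, prod_congr rfl hB, ← prod_map_val, ← prod_map_val]
  simpa only [Multiset.map_map, Function.comp_def] using
    congrArg (fun m => (m.map F).prod) (map_legArm_sdiff μ ν).symm

end YoungDiagram

theorem Finset.prod_mul_prod_eq_of_prod_sdiff_eq {ι M : Type*} [CommMonoid M] [DecidableEq ι]
    {s t : Finset ι} {f g : ι → M} (hst : ∏ i ∈ s \ t, f i = ∏ i ∈ s \ t, g i)
    (hts : ∏ i ∈ t \ s, g i = ∏ i ∈ t \ s, f i) :
    (∏ i ∈ s, f i) * ∏ i ∈ t, g i = (∏ i ∈ s, g i) * ∏ i ∈ t, f i := by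
  rw [← prod_inter_mul_prod_sdiff s t f, ← prod_inter_mul_prod_sdiff t s g,
    ← prod_inter_mul_prod_sdiff s t g, ← prod_inter_mul_prod_sdiff t s f, inter_comm t s, hst,
    hts]
  ac_rfl

open YoungDiagram in
theorem nekrasovFactor_transpose (u q₁ q₂ : ℂ) (μ ν : YoungDiagram) :
    nekrasovFactor u q₁ q₂ μ ν = nekrasovFactor u q₂ q₁ μ.transpose ν.transpose := by
  set g : ℤ → ℤ → ℂ := fun x y => 1 - u * q₁ ^ x * q₂ ^ y
  have lhs : nekrasovFactor u q₁ q₂ μ ν = (∏ c ∈ μ.cells, g (legZ μ c) (-armZ ν c - 1)) *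
      ∏ c ∈ ν.cells, g (-legZ ν c - 1) (armZ μ c) := by
    simp only [nekrasovFactor, g, mul_right_comm u]
  have rhs : nekrasovFactor u q₂ q₁ μ.transpose ν.transpose =
      (∏ c ∈ μ.cells, g (-legZ ν c - 1) (armZ μ c)) *
        ∏ c ∈ ν.cells, g (legZ μ c) (-armZ ν c - 1) := by
    simp only [nekrasovFactor, prod_cells_transpose, armZ_transpose, legZ_transpose, g]
  rw [lhs, rhs]
  refine prod_mul_prod_eq_of_prod_sdiff_eq (prod_sdiff_legZ_armZ g μ ν) ?_
  simpa using prod_sdiff_legZ_armZ (fun x y => g (-x - 1) (-y - 1)) ν μ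

theorem zInst_q_symm_general (u q₁ q₂ : ℂ) :
    (∀ lam mu : YoungDiagram,
        nekrasovFactor u q₁ q₂ lam mu =
          nekrasovFactor u q₂ q₁ lam.transpose mu.transpose) ∧
      ∀ N : ℕ, zInstCoeff u q₁ q₂ N = zInstCoeff u q₂ q₁ N := by
  refine ⟨nekrasovFactor_transpose u q₁ q₂, fun N => ?_⟩
  let e := YoungDiagram.transposeOrderIso.toEquiv
  rw [zInstCoeff, zInstCoeff, ← (e.prodCongr e).tsum_eq]
  refine tsum_congr fun P => ?_
  simp [e, YoungDiagram.card_transpose, ← nekrasovFactor_transpose, mul_comm q₂⁻¹]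

/-- The Nekrasov factor satisfies the transpose symmetry
`N_{λ,μ}(u; q₁, q₂) = N_{λ',μ'}(u; q₂, q₁)`; consequently the level-0 instanton sum
is symmetric in `q₁` and `q₂` as a formal power series in `z`. -/
theorem zInst_q_symm (u q₁ q₂ : ℂ) (hu : u ≠ 0) (hq₁ : q₁ ≠ 0) (hq₂ : q₂ ≠ 0) :
    (∀ lam mu : YoungDiagram,
        nekrasovFactor u q₁ q₂ lam mu =
          nekrasovFactor u q₂ q₁ lam.transpose mu.transpose) ∧
      ∀ N : ℕ, zInstCoeff u q₁ q₂ N = zInstCoeff u q₂ q₁ N :=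
  zInst_q_symm_general u q₁ q₂
end
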